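/- arXiv:1402.0974 — 2 statements merged into one kernel-verified Lean document; each statement's English description precedes it below -/
import Mathlib

section
/- The extreme points of the set of probability distributions on a finite set Ω with all point masses bounded by 1/K (K a positive integer dividing into |Ω|, K ≤ |Ω|) are exactly the flat distributions: distributions uniform on some K-element subset of Ω. -/
open Finset

/-!
A point of the capped simplex with two coordinates strictly between `0` and the cap `1/K` is the
midpoint of the two points obtained by moving a little mass from one coordinate to the other, so
an extreme point has at most one such coordinate. Since the total mass `1 = K · (1/K)` is an
integer multiple of the cap, that last coordinate cannot be fractional either, so an extreme point
takes only the values `0` and `1/K`. Conversely such a point is already an extreme point of the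
box `[0, 1/K]^Ω`.
-/

theorem notMem_Ioo_of_sum_eq_natCast_mul {ι : Type*} [Fintype ι] [DecidableEq ι] {p : ι → ℝ}
    {c : ℝ} {K : ℕ} (hsum : ∑ k, p k = K * c) {i : ι}
    (hrest : ∀ j ≠ i, p j ∈ ({0, c} : Set ℝ)) : p i ∉ Set.Ioo 0 c := by
  rintro ⟨hpos, hlt⟩
  have hc : 0 < c := hpos.trans hlt
  set m := #{j ∈ univ.erase i | p j = c}
  have hrest_sum : ∑ j ∈ univ.erase i, p j = m * c := by
    rw [← nsmul_eq_mul, ← Finset.sum_const, Finset.sum_filter]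
    refine Finset.sum_congr rfl fun j hj => ?_
    obtain h | h : p j = 0 ∨ p j = c := hrest j (Finset.ne_of_mem_erase hj) <;> simp [h, hc.ne]
  have hpi : p i = ((K : ℝ) - m) * c := by
    linarith [Finset.add_sum_erase univ p (mem_univ i)]
  have hlower : (m : ℝ) < K := by nlinarith
  have hupper : (K : ℝ) < m + 1 := by nlinarith
  have : m < K := by exact_mod_cast hlower
  have : K < m + 1 := by exact_mod_cast hupper
  omega

def cappedSimplex (ι : Type*) [Fintype ι] (c : ℝ) : Set (ι → ℝ) :=
  {p | (∀ i, 0 ≤ p i) ∧ ∑ i, p i = 1 ∧ ∀ i, p i ≤ c}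

namespace cappedSimplex

variable {ι : Type*} [Fintype ι] {c : ℝ} {K : ℕ} {p : ι → ℝ}

theorem subset_pi_Icc : cappedSimplex ι c ⊆ Set.univ.pi fun _ => Set.Icc 0 c :=
  fun _ ⟨hnonneg, _, hle⟩ => Set.mem_univ_pi.2 fun i => ⟨hnonneg i, hle i⟩

theorem add_smul_single_sub_single_mem [DecidableEq ι] (hp : p ∈ cappedSimplex ι c) {i j : ι}
    (hij : i ≠ j) {t : ℝ} (hi : p i + t ∈ Set.Icc 0 c) (hj : p j - t ∈ Set.Icc 0 c) :
    p + t • (Pi.single i 1 - Pi.single j 1) ∈ cappedSimplex ι c := by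
  obtain ⟨hnonneg, hsum, hle⟩ := hp
  have hbounds : ∀ k, (p + t • (Pi.single i 1 - Pi.single j 1) : ι → ℝ) k ∈ Set.Icc 0 c := by
    intro k
    rcases eq_or_ne k i with rfl | hki
    · simpa [hij] using hi
    rcases eq_or_ne k j with rfl | hkj
    · simpa [hki, sub_eq_add_neg] using hj
    · simpa [hki, hkj] using And.intro (hnonneg k) (hle k)
  refine ⟨fun k => (hbounds k).1, ?_, fun k => (hbounds k).2⟩
  simp [Finset.sum_add_distrib, ← Finset.mul_sum, Finset.sum_sub_distrib, hsum]

theorem notMem_Ioo_of_mem_Ioo_of_mem_extremePoints [DecidableEq ι]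
    (hp : p ∈ (cappedSimplex ι c).extremePoints ℝ) {i j : ι} (hij : i ≠ j)
    (hi : p i ∈ Set.Ioo 0 c) : p j ∉ Set.Ioo 0 c := by
  intro hj
  set ε := min (min (p i) (c - p i)) (min (p j) (c - p j))
  have hε : 0 < ε := by
    simp only [ε, lt_min_iff, sub_pos]
    exact ⟨⟨hi.1, hi.2⟩, hj.1, hj.2⟩
  have hεi : ε ≤ p i ∧ ε ≤ c - p i := ⟨by simp [ε], by simp [ε]⟩
  have hεj : ε ≤ p j ∧ ε ≤ c - p j := ⟨by simp [ε], by simp [ε]⟩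
  set v : ι → ℝ := ε • (Pi.single i 1 - Pi.single j 1)
  have hplus : p + v ∈ cappedSimplex ι c :=
    add_smul_single_sub_single_mem hp.1 hij ⟨by linarith, by linarith⟩ ⟨by linarith, by linarith⟩
  have hminus : p - v ∈ cappedSimplex ι c := by
    rw [sub_eq_add_neg, ← neg_smul]
    exact add_smul_single_sub_single_mem hp.1 hij ⟨by linarith, by linarith⟩
      ⟨by linarith, by linarith⟩
  have hv : p + v = p := hp.2 hplus hminus (mem_openSegment_add_sub p v)
  have := congrFun hv i
  simp [v, hij] at this
  exact hε.ne' this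

theorem mem_pair_of_mem_extremePoints [DecidableEq ι] (hK : 0 < K)
    (hp : p ∈ (cappedSimplex ι (1 / K)).extremePoints ℝ) (i : ι) :
    p i ∈ ({0, 1 / (K : ℝ)} : Set ℝ) := by
  have hbounds : ∀ j, p j ∈ Set.Icc 0 (1 / (K : ℝ)) := fun j => ⟨hp.1.1 j, hp.1.2.2 j⟩
  have hIcc : ∀ j, p j ∉ Set.Ioo 0 (1 / (K : ℝ)) → p j ∈ ({0, 1 / (K : ℝ)} : Set ℝ) := by
    intro j hj
    rw [← Set.Icc_sdiff_Ioo_same (by positivity)]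
    exact ⟨hbounds j, hj⟩
  refine hIcc i fun hi => ?_
  have hrest : ∀ j ≠ i, p j ∈ ({0, 1 / (K : ℝ)} : Set ℝ) := fun j hji =>
    hIcc j (notMem_Ioo_of_mem_Ioo_of_mem_extremePoints hp hji.symm hi)
  have hsum : ∑ k, p k = K * (1 / K) := by
    rw [hp.1.2.1]
    field_simp
  exact notMem_Ioo_of_sum_eq_natCast_mul hsum hrest hi

theorem exists_eq_flat_of_mem_extremePoints [DecidableEq ι] (hK : 0 < K)
    (hp : p ∈ (cappedSimplex ι (1 / K)).extremePoints ℝ) :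
    ∃ S : Finset ι, #S = K ∧ p = fun i => if i ∈ S then 1 / (K : ℝ) else 0 := by
  set S : Finset ι := {i | p i ≠ 0}
  have hflat : p = fun i => if i ∈ S then 1 / (K : ℝ) else 0 := by
    funext i
    obtain h | h : p i = 0 ∨ p i = 1 / K := mem_pair_of_mem_extremePoints hK hp i <;>
      simp [S, h, hK.ne']
  refine ⟨S, ?_, hflat⟩
  have hsum := hp.1.2.1
  simp only [hflat, Finset.sum_ite_mem, Finset.univ_inter, Finset.sum_const, nsmul_eq_mul] at hsum
  field_simp at hsum
  exact_mod_cast hsum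

theorem flat_mem_extremePoints [DecidableEq ι] (hK : 0 < K) {S : Finset ι} (hS : #S = K) :
    (fun i => if i ∈ S then 1 / (K : ℝ) else 0) ∈ (cappedSimplex ι (1 / K)).extremePoints ℝ := by
  have hKinv : (0 : ℝ) ≤ 1 / K := by positivity
  refine inter_extremePoints_subset_extremePoints_of_subset subset_pi_Icc ⟨?_, ?_⟩
  · refine ⟨fun i => by by_cases hi : i ∈ S <;> simp [hi], ?_,
      fun i => by by_cases hi : i ∈ S <;> simp [hi]⟩
    simp only [Finset.sum_ite_mem, Finset.univ_inter, Finset.sum_const, nsmul_eq_mul, hS]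
    field_simp
  · rw [extremePoints_pi, Set.mem_univ_pi]
    intro i
    rw [Set.extremePoints_Icc hKinv]
    split_ifs <;> simp

end cappedSimplex

theorem stmt_4_general (Ω : Type*) [Fintype Ω] [DecidableEq Ω] (K : ℕ) (hK : 0 < K) :
    Set.extremePoints ℝ
      {p : Ω → ℝ | (∀ ω, 0 ≤ p ω) ∧ (∑ ω, p ω = 1) ∧ (∀ ω, p ω ≤ 1 / (K : ℝ))}
    = {p : Ω → ℝ | ∃ S : Finset Ω, S.card = K ∧
        p = fun ω => if ω ∈ S then 1 / (K : ℝ) else 0} := by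
  ext p
  constructor
  · exact cappedSimplex.exists_eq_flat_of_mem_extremePoints hK
  · rintro ⟨S, hS, rfl⟩
    exact cappedSimplex.flat_mem_extremePoints hK hS

/-- The extreme points of the set of probability distributions on a finite set Ω with all
point masses bounded by 1/K are exactly the flat distributions (uniform on K-element subsets). -/
theorem stmt_4 (Ω : Type*) [Fintype Ω] [DecidableEq Ω] (K : ℕ) (hK : 0 < K) (hKcard : K ≤ Fintype.card Ω)
    (hdvd : K ∣ Fintype.card Ω) :
    Set.extremePoints ℝ
      {p : Ω → ℝ | (∀ ω, 0 ≤ p ω) ∧ (∑ ω, p ω = 1) ∧ (∀ ω, p ω ≤ 1 / (K : ℝ))}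
    = {p : Ω → ℝ | ∃ S : Finset Ω, S.card = K ∧
        p = fun ω => if ω ∈ S then 1 / (K : ℝ) else 0} :=
  stmt_4_general Ω K hK
end

section
/- For any local hidden variable model in the tripartite Mermin scenario (a probability distribution over deterministic strategies), the Mermin value with uniform inputs satisfies v_u ≤ 3/4, and this bound is tight: there exists a deterministic strategy achieving v_u = 3/4. -/
/-
A deterministic strategy wins on input `t` iff `a(x) ⊕ b(y) ⊕ c(z) = xyz`. Summed mod 2 over the
four Mermin inputs, the left-hand sides cancel (each of `a 0, a 1, b 0, b 1, c 0, c 1` occurs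
exactly twice) while the right-hand sides add up to `1`; so every deterministic strategy loses on
at least one input and has value at most `3/4`, and a mixture of them is an average of such values.
Constant-zero outputs lose only on `111`.
-/

open Finset

/-- The Mermin value (with uniform inputs) of a deterministic strategy (a,b,c). -/
noncomputable def merminValue (s : (Bool → Bool) × (Bool → Bool) × (Bool → Bool)) : ℝ :=
  (∑ t ∈ ({(true, true, true), (true, false, false),
            (false, true, false), (false, false, true)} : Finset (Bool × Bool × Bool)),
      (if xor (s.1 t.1) (xor (s.2.1 t.2.1) (s.2.2 t.2.2)) = (t.1 && t.2.1 && t.2.2)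
        then (1 : ℝ) else 0)) / 4

theorem sum_mul_le_of_le {ι R : Type*} [Semiring R] [PartialOrder R] [IsOrderedRing R]
    (s : Finset ι) {q f : ι → R} {c : R} (hq : ∀ i ∈ s, 0 ≤ q i) (hsum : ∑ i ∈ s, q i = 1)
    (hf : ∀ i ∈ s, f i ≤ c) : ∑ i ∈ s, q i * f i ≤ c :=
  calc ∑ i ∈ s, q i * f i ≤ ∑ i ∈ s, q i * c :=
        sum_le_sum fun i hi => mul_le_mul_of_nonneg_left (hf i hi) (hq i hi)
    _ = c := by rw [← sum_mul, hsum, one_mul]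

namespace Mermin

abbrev Strategy : Type := (Bool → Bool) × (Bool → Bool) × (Bool → Bool)

def inputs : Finset (Bool × Bool × Bool) :=
  {(true, true, true), (true, false, false), (false, true, false), (false, false, true)}

def Wins (s : Strategy) (t : Bool × Bool × Bool) : Prop :=
  xor (s.1 t.1) (xor (s.2.1 t.2.1) (s.2.2 t.2.2)) = (t.1 && t.2.1 && t.2.2)

instance (s : Strategy) : DecidablePred (Wins s) := fun _ => inferInstanceAs (Decidable (_ = _))

theorem merminValue_eq_card (s : Strategy) :
    merminValue s = #(inputs.filter (Wins s)) / 4 := by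
  rw [merminValue, ← sum_boole]; rfl

theorem exists_not_wins (s : Strategy) : ∃ t ∈ inputs, ¬ Wins s t := by
  obtain ⟨a, b, c⟩ := s
  by_contra! h
  simp only [inputs, mem_insert, mem_singleton, forall_eq_or_imp, forall_eq, Wins] at h
  obtain ⟨h₁, h₂, h₃, h₄⟩ := h
  have parity := congrArg₂ xor (congrArg₂ xor h₁ h₂) (congrArg₂ xor h₃ h₄)
  simp [Bool.xor_left_comm, Bool.xor_comm] at parity

theorem merminValue_le (s : Strategy) : merminValue s ≤ 3 / 4 := by
  have hlt : #(inputs.filter (Wins s)) < 4 :=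
    card_lt_card (filter_ssubset.2 (exists_not_wins s))
  rw [merminValue_eq_card]
  gcongr
  exact_mod_cast Nat.lt_succ_iff.mp hlt

theorem merminValue_const_false :
    merminValue (fun _ => false, fun _ => false, fun _ => false) = 3 / 4 := by
  have hcard : #(inputs.filter (Wins (fun _ => false, fun _ => false, fun _ => false))) = 3 := by
    decide
  rw [merminValue_eq_card, hcard]
  norm_num

end Mermin

/-- Any local hidden variable model (a distribution over deterministic strategies) has Mermin
value ≤ 3/4 with uniform inputs, and the bound is achieved by some deterministic strategy. -/
theorem stmt_7 :
    (∀ q : ((Bool → Bool) × (Bool → Bool) × (Bool → Bool)) → ℝ,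
      (∀ s, 0 ≤ q s) → (∑ s, q s = 1) →
      ∑ s, q s * merminValue s ≤ 3 / 4) ∧
    (∃ s : (Bool → Bool) × (Bool → Bool) × (Bool → Bool), merminValue s = 3 / 4) :=
  ⟨fun _ hq hsum => sum_mul_le_of_le _ (fun s _ => hq s) hsum fun s _ => Mermin.merminValue_le s,
    _, Mermin.merminValue_const_false⟩
end
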